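/- arXiv:2302.10162 — 6 statements merged into one kernel-verified Lean document; each statement's English description precedes it below -/
import Mathlib

section
/- Let p be an odd prime, h ≥ 1, q = p^h, and let F be an algebraically closed field of characteristic p. Let a, b ∈ F be such that there is no element t ∈ F with a = 2(t+1)^{q+1} and b = 2 + t^q + t. Then the bivariate polynomial F(U,V) = V·(2(U+1)^{q+1} − a) − U^q − U − 2 + b is irreducible in F[U,V]. -/
/-!
Viewed as a polynomial in `V` over `F[U]`, the polynomial is linear, `f(U) V - g(U)` with
`f = 2(U+1)^{q+1} - a` and `g = U^q + U + 2 - b`. A common root `t` of `f` and `g` is exactly a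
`t` with `a = 2(t+1)^{q+1}` and `b = 2 + t^q + t`, so by hypothesis `f` and `g` are coprime in
`F[U]`, as `F` is algebraically closed. A linear polynomial with coprime coefficients is
irreducible, provided its leading coefficient `f` is nonzero; this holds because `2 ≠ 0` in odd
characteristic.
-/

open Polynomial

theorem two_ne_zero_of_charP_of_odd {R : Type*} [NonAssocSemiring R] [Nontrivial R] {p : ℕ}
    [CharP R p] (hp : Odd p) : (2 : R) ≠ 0 :=
  Ring.two_ne_zero <| by
    rw [ringChar.eq R p]
    rintro rfl
    exact Nat.not_odd_iff_even.mpr even_two hp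

theorem Polynomial.irreducible_C_mul_X_sub_C {R : Type*} [CommRing R] [IsDomain R] {f g : R}
    (hf : f ≠ 0) (hfg : IsRelPrime f g) : Irreducible (C f * X - C g) := by
  apply irreducible_of_degree_eq_one_of_isRelPrime_coeff
  · rw [sub_eq_add_neg, ← C_neg, degree_linear hf]
  · simpa using hfg.symm.neg_left

theorem stmt_0_general (p q : ℕ) (hodd : Odd p)
    (F : Type) [Field F] [IsAlgClosed F] [CharP F p] (a b : F)
    (hab : ¬ ∃ t : F, a = 2 * (t + 1) ^ (q + 1) ∧ b = 2 + t ^ q + t) :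
    Irreducible
      ((C (2 * (X + 1) ^ (q + 1) - C a) * X
          - C (X ^ q + X + C 2 - C b)) : Polynomial (Polynomial F)) := by
  have h2 : (2 : F) ≠ 0 := two_ne_zero_of_charP_of_odd hodd
  have hf : (2 * (X + 1) ^ (q + 1) - C a : F[X]) ≠ 0 := by
    apply ne_zero_of_natDegree_gt (n := q)
    rw [show (2 * (X + 1) ^ (q + 1) - C a : F[X]).natDegree = q + 1 by compute_degree!]
    exact q.lt_succ_self
  have hcoprime : IsCoprime (2 * (X + 1) ^ (q + 1) - C a : F[X]) (X ^ q + X + C 2 - C b) := by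
    rw [isCoprime_iff_aeval_ne_zero_of_isAlgClosed F F]
    intro t
    by_contra! ht
    simp only [coe_aeval_eq_eval, eval_sub, eval_add, eval_mul, eval_pow, eval_X, eval_C,
      eval_one, eval_ofNat] at ht
    exact hab ⟨t, by linear_combination -ht.1, by linear_combination -ht.2⟩
  exact irreducible_C_mul_X_sub_C hf hcoprime.isRelPrime

theorem stmt_0 (p h q : ℕ) [Fact p.Prime] (hodd : Odd p) (hh : 0 < h) (hq : q = p ^ h)
    (F : Type) [Field F] [IsAlgClosed F] [CharP F p] (a b : F)
    (hab : ¬ ∃ t : F, a = 2 * (t + 1) ^ (q + 1) ∧ b = 2 + t ^ q + t) :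
    Irreducible
      ((C (2 * (X + 1) ^ (q + 1) - C a) * X
          - C (X ^ q + X + C 2 - C b)) : Polynomial (Polynomial F)) :=
  stmt_0_general p q hodd F a b hab
end

section
/- Let p be a prime, h ≥ 1, q = p^h, F an algebraically closed field of characteristic p, and K = F(m) the rational function field over F. Let a, b ∈ F with a^{q+1} + b^q + b ≠ 0. Then the polynomial f(T) = T^{q+1} + m^q·T^q + m·T − ((m·a − b)^q + m·a − b) is irreducible in K[T]. -/
/-!
Since `f` is monic in `T`, Gauss's lemma reduces the claim to irreducibility in `F[m, T]`. Read as
a polynomial in `m`, and using that `x ↦ x^q` is additive, `f` becomes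
`g = (T - a)^q m^q + (T - a) m + (T^(q+1) + b^q + b)`. This is primitive over `F[T]`, because the
hypothesis on `a, b` says that `T - a` does not divide `T^(q+1) + b^q + b`, so it suffices that `g`
is irreducible over `F(T)`. There the substitution `y = (T - a) m + b` turns `g` into
`y^q + y + T^(q+1)`, which is Eisenstein at `y` as a polynomial in `T` over `F[y]`.
-/

open Polynomial
open scoped Polynomial.Bivariate

namespace Polynomial

theorem irreducible_X_pow_add_C_of_prime {R : Type*} [CommRing R] [IsDomain R] {π r : R}
    (hπ : Prime π) (hr : π ∣ r) (hr2 : ¬π ^ 2 ∣ r) {n : ℕ} (hn : 0 < n) :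
    Irreducible (X ^ n + C r : R[X]) := by
  have hmonic : (X ^ n + C r : R[X]).Monic := monic_X_pow_add_C r hn.ne'
  have hdeg : (X ^ n + C r : R[X]).natDegree = n := natDegree_X_pow_add_C
  have hprime : (Ideal.span {π}).IsPrime := (Ideal.span_singleton_prime hπ.ne_zero).mpr hπ
  refine (hmonic.isEisensteinAt_of_mem_of_notMem hprime.ne_top (fun hk => ?_) ?_).irreducible
    hprime hmonic.isPrimitive (hdeg.symm ▸ hn)
  · rw [hdeg] at hk
    rw [coeff_add, coeff_X_pow, if_neg hk.ne, zero_add, coeff_C, Ideal.mem_span_singleton]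
    split_ifs
    exacts [hr, dvd_zero π]
  · simpa [coeff_X_pow, hn.ne, Ideal.span_singleton_pow, Ideal.mem_span_singleton] using hr2

theorem isPrimitive_of_irreducible_coeff {R : Type*} [CommSemiring R] {f : R[X]} {i j : ℕ}
    (hi : Irreducible (f.coeff i)) (hij : ¬f.coeff i ∣ f.coeff j) : f.IsPrimitive := by
  intro r hr
  rw [C_dvd_iff_dvd_coeff] at hr
  obtain ⟨s, hs⟩ := hr i
  refine (hi.isUnit_or_isUnit hs).resolve_right fun hs_unit => hij ?_
  rw [hs]
  exact hs_unit.mul_right_dvd.mpr (hr j)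

theorem irreducible_comp_C_mul_X_add_C_iff {R : Type*} [CommRing R] {f : R[X]} {a b : R}
    (ha : IsUnit a) : Irreducible (f.comp (C a * X + C b)) ↔ Irreducible f :=
  letI := ha.invertible
  MulEquiv.irreducible_iff (algEquivCMulXAddC a b)

section Bivariate

variable {R : Type*} [CommRing R] [IsDomain R] {n q : ℕ}

theorem irreducible_Y_pow_add_C_X_pow_add_X (hn : 0 < n) (hq : 2 ≤ q) :
    Irreducible (Y ^ n + C (X ^ q + X) : R[X][Y]) := by
  refine irreducible_X_pow_add_C_of_prime prime_X ?_ ?_ hn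
  · exact dvd_add (dvd_pow_self X (by omega)) dvd_rfl
  · rw [X_pow_dvd_iff]
    intro h
    simpa [coeff_X_pow, show 1 ≠ q by omega] using h 1 one_lt_two

theorem irreducible_Y_pow_add_Y_add_C_X_pow (hn : 0 < n) (hq : 2 ≤ q) :
    Irreducible (Y ^ q + Y + C (X ^ n) : R[X][Y]) := by
  rw [← MulEquiv.irreducible_iff Bivariate.swap]
  convert irreducible_Y_pow_add_C_X_pow_add_X (R := R) hn hq using 1
  simp only [map_pow, map_add, Bivariate.swap_Y, Bivariate.swap_X]
  ring

end Bivariate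

theorem irreducible_X_pow_add_X_add_C_ratFunc_X_pow {F : Type*} [Field F] {n q : ℕ}
    (hn : 0 < n) (hq : 2 ≤ q) :
    Irreducible (X ^ q + X + C (RatFunc.X ^ n) : (RatFunc F)[X]) := by
  have hmonic : (Y ^ q + Y + C (X ^ n) : F[X][Y]).Monic := by
    monicity!
    simp [show 1 ≤ q by omega, show ¬q ≤ 1 by omega]
  convert (hmonic.irreducible_iff_irreducible_map_fraction_map (K := RatFunc F)).mp
    (irreducible_Y_pow_add_Y_add_C_X_pow hn hq) using 1
  simp [RatFunc.algebraMap_X]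

end Polynomial

section

variable {F : Type*} [Field F] (q : ℕ) (a b : F)

/-- `f` as a polynomial in `T = Y` over `F[m]`, with `m = X`. -/
noncomputable def fBivariate : F[X][Y] :=
  Y ^ (q + 1) + C (X ^ q) * Y ^ q + C X * Y - C ((X * C a - C b) ^ q + (X * C a - C b))

/-- `f` as a polynomial in `m = Y` over `F[T]`, with `T = X`. -/
noncomputable def fSwapped : F[X][Y] :=
  C ((X - C a) ^ q) * Y ^ q + C (X - C a) * Y + C (X ^ (q + 1) + C (b ^ q + b))

variable {q}

theorem monic_fBivariate (hq : q ≠ 0) : (fBivariate q a b).Monic := by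
  unfold fBivariate
  monicity!

theorem map_fBivariate : (fBivariate q a b).map (algebraMap F[X] (RatFunc F)) =
    X ^ (q + 1) + C (RatFunc.X ^ q) * X ^ q + C RatFunc.X * X
      - C ((RatFunc.X * RatFunc.C a - RatFunc.C b) ^ q
        + (RatFunc.X * RatFunc.C a - RatFunc.C b)) := by
  simp only [fBivariate, Polynomial.map_add, Polynomial.map_sub, Polynomial.map_mul,
    Polynomial.map_pow, Polynomial.map_C, Polynomial.map_X, map_add, map_sub, map_mul, map_pow,
    RatFunc.algebraMap_X, RatFunc.algebraMap_C]

theorem isPrimitive_fSwapped (hq : 1 < q) (hab : a ^ (q + 1) + b ^ q + b ≠ 0) :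
    (fSwapped q a b).IsPrimitive := by
  refine isPrimitive_of_irreducible_coeff (i := 1) (j := 0) ?_ ?_
  all_goals simp only [fSwapped, coeff_add, coeff_C_mul, coeff_X_pow, coeff_X_one, coeff_X_zero,
    coeff_C_zero, coeff_C_succ, hq.ne, (Nat.zero_lt_of_lt hq).ne, if_false, mul_zero, mul_one,
    zero_add, add_zero]
  · exact irreducible_X_sub_C a
  · rw [dvd_iff_isRoot]
    simpa [IsRoot, add_assoc] using hab

variable (p h : ℕ) [Fact p.Prime] [CharP F p]

theorem swap_fBivariate : Bivariate.swap (fBivariate (p ^ h) a b) = fSwapped (p ^ h) a b := by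
  simp only [fBivariate, fSwapped, map_add, map_sub, map_mul, map_pow, Bivariate.swap_X,
    Bivariate.swap_Y, Bivariate.swap_C_C, sub_pow_char_pow]
  ring

theorem map_fSwapped : (fSwapped (p ^ h) a b).map (algebraMap F[X] (RatFunc F)) =
    (X ^ p ^ h + X + C (RatFunc.X ^ (p ^ h + 1))).comp
      (C (RatFunc.X - RatFunc.C a) * X + C (RatFunc.C b)) := by
  simp only [fSwapped, Polynomial.map_add, Polynomial.map_mul, Polynomial.map_pow,
    Polynomial.map_C, Polynomial.map_X, Polynomial.map_sub, map_add, map_sub, map_pow,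
    RatFunc.algebraMap_X, RatFunc.algebraMap_C, add_comp, pow_comp, X_comp, C_comp,
    add_pow_char_pow, mul_pow]
  ring

theorem irreducible_fSwapped (hh : 0 < h) (hab : a ^ (p ^ h + 1) + b ^ p ^ h + b ≠ 0) :
    Irreducible (fSwapped (p ^ h) a b) := by
  have hq : 1 < p ^ h := Nat.one_lt_pow hh.ne' (Fact.out : p.Prime).one_lt
  have hunit : IsUnit (RatFunc.X - RatFunc.C a : RatFunc F) := by
    refine isUnit_iff_ne_zero.mpr ?_
    simpa [RatFunc.algebraMap_X, RatFunc.algebraMap_C] using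
      RatFunc.algebraMap_ne_zero (X_sub_C_ne_zero a)
  refine (isPrimitive_fSwapped a b hq hab).irreducible_of_irreducible_map_of_injective
    (IsFractionRing.injective F[X] (RatFunc F)) ?_
  rw [map_fSwapped, irreducible_comp_C_mul_X_add_C_iff hunit]
  exact irreducible_X_pow_add_X_add_C_ratFunc_X_pow (by omega) hq

end

theorem stmt_2_general (p h q : ℕ) [Fact p.Prime] (hh : 0 < h) (hq : q = p ^ h)
    (F : Type) [Field F] [CharP F p] (a b : F)
    (hab : a ^ (q + 1) + b ^ q + b ≠ 0) :
    Irreducible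
      ((X ^ (q + 1) + C (RatFunc.X ^ q) * X ^ q + C RatFunc.X * X
          - C ((RatFunc.X * RatFunc.C a - RatFunc.C b) ^ q
              + (RatFunc.X * RatFunc.C a - RatFunc.C b))) : Polynomial (RatFunc F)) := by
  subst hq
  have hirr : Irreducible (fBivariate (p ^ h) a b) := by
    rw [← MulEquiv.irreducible_iff Bivariate.swap, swap_fBivariate]
    exact irreducible_fSwapped a b p h hh hab
  rw [← map_fBivariate]
  exact (monic_fBivariate a b (pow_ne_zero h (Fact.out : p.Prime).ne_zero)
    |>.irreducible_iff_irreducible_map_fraction_map).mp hirr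

theorem stmt_2 (p h q : ℕ) [Fact p.Prime] (hh : 0 < h) (hq : q = p ^ h)
    (F : Type) [Field F] [IsAlgClosed F] [CharP F p] (a b : F)
    (hab : a ^ (q + 1) + b ^ q + b ≠ 0) :
    Irreducible
      ((X ^ (q + 1) + C (RatFunc.X ^ q) * X ^ q + C RatFunc.X * X
          - C ((RatFunc.X * RatFunc.C a - RatFunc.C b) ^ q
              + (RatFunc.X * RatFunc.C a - RatFunc.C b))) : Polynomial (RatFunc F)) :=
  stmt_2_general p h q hh hq F a b hab
end

section
/- Let p be a prime, h ≥ 1, q = p^h, and let F be an algebraically closed field of characteristic p. Let a, b ∈ F with a^{q+1} + b^q + b ≠ 0. Suppose ξ, η, ζ ∈ F satisfy the two equations ξ^{q+1} + η^q·ξ^q + η·ξ − ((η·a − b)^q + (η·a − b)) = 0 and ζ^q + (ξ + η^q)·ζ^{q−1} + ξ^q + η = 0, and suppose ξ^{q²} ≠ ξ, ζ ≠ 0, and either ξ^q + η = 0 or ξ + η^q = 0. Then the two vectors (ξ^q + η, ξ − a, 0) and (ζ^{q−1}, 1, −ζ^{q−2}·(ξ + η^q)) in F³ are linearly independent over F (i.e.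 the Jacobian matrix of the two defining polynomials at (ξ, η, ζ) has rank 2, so (ξ, η, ζ) is a non-singular point of the space curve they define). -/
/-!
Only the first two coordinates matter: it suffices that the minor
`(ξ^q + η) - (ξ - a) ζ^(q-1)` does not vanish. Writing `c = a^(q+1) + b^q + b`, additivity of
`x ↦ x^q` turns the first equation into `(ξ^q + η)(ξ - a) + (η^q + a)(ξ - a)^q + c = 0`.
If `ξ^q + η = 0` the minor is `-(ξ - a) ζ^(q-1)`, and `ξ = a` would force `c = 0`.
If `ξ + η^q = 0` the second equation reads `ξ^q + η = -ζ^q`, so the minor is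
`-ζ^(q-1) (ζ + ξ - a)`; and `ζ = a - ξ` would give `ξ^q + η = (ξ - a)^q`, `η^q + a = -(ξ - a)`,
so again `c = 0`.
-/

theorem LinearIndependent.pair_of_mul_sub_mul_ne_zero {R ι : Type*} [CommRing R] [IsDomain R]
    {u v : ι → R} (i j : ι) (h : u i * v j - u j * v i ≠ 0) : LinearIndependent R ![u, v] := by
  rw [LinearIndependent.pair_iff]
  intro s t hst
  have hi := congrFun hst i
  have hj := congrFun hst j
  simp only [Pi.add_apply, Pi.smul_apply, smul_eq_mul, Pi.zero_apply] at hi hj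
  refine ⟨(mul_eq_zero.mp ?_).resolve_right h, (mul_eq_zero.mp ?_).resolve_right h⟩
  · linear_combination v j * hi - v i * hj
  · linear_combination u i * hj - u j * hi

theorem pow_expChar_pow_succ_add_sub_eq {R : Type*} [CommRing R] (p n : ℕ) [ExpChar R p]
    (a b x y : R) :
    x ^ (p ^ n + 1) + y ^ p ^ n * x ^ p ^ n + y * x - ((y * a - b) ^ p ^ n + (y * a - b)) =
      (x ^ p ^ n + y) * (x - a) + (y ^ p ^ n + a) * (x - a) ^ p ^ n +
        (a ^ (p ^ n + 1) + b ^ p ^ n + b) := by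
  rw [sub_pow_expChar_pow, sub_pow_expChar_pow, mul_pow]
  ring

theorem stmt_5_general (p h q : ℕ) [Fact p.Prime] (hq : q = p ^ h)
    (F : Type) [Field F] [CharP F p] (a b : F)
    (hab : a ^ (q + 1) + b ^ q + b ≠ 0)
    (ξ η ζ : F)
    (h1 : ξ ^ (q + 1) + η ^ q * ξ ^ q + η * ξ - ((η * a - b) ^ q + (η * a - b)) = 0)
    (h2 : ζ ^ q + (ξ + η ^ q) * ζ ^ (q - 1) + ξ ^ q + η = 0)
    (hζ : ζ ≠ 0)
    (htan : ξ ^ q + η = 0 ∨ ξ + η ^ q = 0) :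
    LinearIndependent F
      ![![ξ ^ q + η, ξ - a, 0],
        ![ζ ^ (q - 1), 1, -ζ ^ (q - 2) * (ξ + η ^ q)]] := by
  subst hq
  rw [pow_expChar_pow_succ_add_sub_eq] at h1
  apply LinearIndependent.pair_of_mul_sub_mul_ne_zero 0 1
  simp only [Matrix.cons_val_zero, Matrix.cons_val_one, mul_one]
  rcases htan with hA | hB
  · have hξa : ξ - a ≠ 0 := by
      intro hξa
      apply hab
      rw [hA, hξa, zero_pow (expChar_pow_pos F p h).ne'] at h1
      linear_combination h1
    rw [hA, zero_sub, neg_ne_zero]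
    exact mul_ne_zero hξa (pow_ne_zero _ hζ)
  · have hζpow := pow_sub_one_mul (expChar_pow_pos F p h).ne' ζ
    have hkey : ζ + ξ - a ≠ 0 := by
      intro hz
      apply hab
      have hζq : ζ ^ p ^ h = -(ξ - a) ^ p ^ h := by
        rw [show ζ = a - ξ by linear_combination hz, sub_pow_char_pow, sub_pow_char_pow]
        ring
      linear_combination h1 - (ξ - a) * h2 + (ξ - a) * ζ ^ (p ^ h - 1) * hB
        - (ξ - a) ^ p ^ h * hB + (ξ - a) * hζq
    have hminor : ξ ^ p ^ h + η - (ξ - a) * ζ ^ (p ^ h - 1) = -(ζ ^ (p ^ h - 1) * (ζ + ξ - a)) := by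
      linear_combination h2 - ζ ^ (p ^ h - 1) * hB + hζpow
    rw [hminor, neg_ne_zero]
    exact mul_ne_zero (pow_ne_zero _ hζ) hkey

theorem stmt_5 (p h q : ℕ) [Fact p.Prime] (hh : 0 < h) (hq : q = p ^ h)
    (F : Type) [Field F] [IsAlgClosed F] [CharP F p] (a b : F)
    (hab : a ^ (q + 1) + b ^ q + b ≠ 0)
    (ξ η ζ : F)
    (h1 : ξ ^ (q + 1) + η ^ q * ξ ^ q + η * ξ - ((η * a - b) ^ q + (η * a - b)) = 0)
    (h2 : ζ ^ q + (ξ + η ^ q) * ζ ^ (q - 1) + ξ ^ q + η = 0)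
    (hξ : ξ ^ (q ^ 2) ≠ ξ) (hζ : ζ ≠ 0)
    (htan : ξ ^ q + η = 0 ∨ ξ + η ^ q = 0) :
    LinearIndependent F
      ![![ξ ^ q + η, ξ - a, 0],
        ![ζ ^ (q - 1), 1, -ζ ^ (q - 2) * (ξ + η ^ q)]] :=
  stmt_5_general p h q hq F a b hab ξ η ζ h1 h2 hζ htan
end

section
/- Let p be a prime, h ≥ 1, q = p^h, F an algebraically closed field of characteristic p, and K = F(m) the rational function field over F. Then for every a ∈ F, the polynomial g(T) = T^q + (a + m^q)·T^{q−1} + (m + a^q) is irreducible in K[T]. -/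
/-
Regard g as a polynomial in T over F[m]. Reversing its coefficients, exchanging the two
variables T and m, and reversing again turns g into (1 + a T + a^q T^q) m^q + T^q m^(q-1) + T,
which is Eisenstein at the prime T of F[T]. Over a domain, reversal (`mirror`) is multiplicative
and detects units, and the swap of variables is a ring automorphism, so g is irreducible in
F[m][T]; being monic, it stays irreducible in F(m)[T] by Gauss's lemma.
-/

open Polynomial Polynomial.Bivariate

namespace Polynomial

theorem Bivariate.swap_trinomial {R : Type*} [CommRing R] (a : R) (q : ℕ) :
    swap (trinomial 0 1 q 1 (C a + X ^ q) (X + C (a ^ q)) : R[X][X]) =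
      trinomial 0 1 q (1 + C a * X + C (a ^ q) * X ^ q) (X ^ q) X := by
  simp only [trinomial_def, map_add, map_mul, map_pow, map_one, pow_zero, pow_one, mul_one,
    swap_C_C, swap_X, swap_Y]
  ring

variable {R : Type*} [CommRing R] [IsDomain R]

theorem isUnit_of_isUnit_mirror {f : R[X]} (h : IsUnit f.mirror) : IsUnit f := by
  have hdeg : f.natDegree = 0 := mirror_natDegree (p := f) ▸ natDegree_eq_zero_of_isUnit h
  rw [eq_C_of_natDegree_eq_zero hdeg] at h ⊢
  rwa [mirror_C] at h

theorem irreducible_of_irreducible_mirror {f : R[X]} (h : Irreducible f.mirror) :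
    Irreducible f := by
  refine ⟨fun hf => h.not_isUnit ?_, fun a b hab => ?_⟩
  · rw [← mirror_mirror (p := f)] at hf
    exact isUnit_of_isUnit_mirror hf
  · rw [hab, mirror_mul_of_domain] at h
    exact (h.isUnit_or_isUnit rfl).imp isUnit_of_isUnit_mirror isUnit_of_isUnit_mirror

theorem irreducible_trinomial_of_prime {π b u : R} {m n : ℕ} (hπ : Prime π) (hb : π ∣ b)
    (hu : ¬π ∣ u) (hm : 0 < m) (hmn : m < n) : Irreducible (trinomial 0 m n π b u) := by
  have hu0 : u ≠ 0 := by rintro rfl; exact hu (dvd_zero π)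
  have hdeg : (trinomial 0 m n π b u).degree = n := by
    rw [degree_eq_natDegree, trinomial_natDegree hm hmn hu0]
    exact ne_zero_of_natDegree_gt (trinomial_natDegree hm hmn hu0 ▸ hmn)
  have hcoeff0 : (trinomial 0 m n π b u).coeff 0 = π := trinomial_trailing_coeff' hm hmn
  have hcoeffn : (trinomial 0 m n π b u).coeff n = u := trinomial_leading_coeff' hm hmn
  refine irreducible_of_eisenstein_criterion (P := Ideal.span {π})
    ((Ideal.span_singleton_prime hπ.ne_zero).mpr hπ) ?_ ?_ ?_ ?_ ?_
  · rwa [trinomial_leadingCoeff hm hmn hu0, Ideal.mem_span_singleton]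
  · intro k hk
    rw [hdeg, Nat.cast_lt] at hk
    simp only [trinomial_def, coeff_add, coeff_C_mul_X_pow, if_neg hk.ne, add_zero,
      Ideal.mem_span_singleton]
    split_ifs <;> first | omega | simp [hb]
  · rw [hdeg]
    exact_mod_cast hm.trans hmn
  · rw [hcoeff0, Ideal.span_singleton_pow, Ideal.mem_span_singleton, pow_two]
    exact fun h => hπ.not_dvd_one ((mul_dvd_mul_iff_left hπ.ne_zero).mp (by rwa [mul_one]))
  · intro r hr
    obtain ⟨s, hs⟩ : r ∣ π := hcoeff0 ▸ (C_dvd_iff_dvd_coeff r _).mp hr 0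
    have hru : r ∣ u := hcoeffn ▸ (C_dvd_iff_dvd_coeff r _).mp hr n
    refine (hπ.irreducible.isUnit_or_isUnit hs).resolve_right fun hsu => hu ?_
    have hrπ : Associated r π := ⟨hsu.unit, hs.symm⟩
    exact hrπ.symm.dvd.trans hru

theorem irreducible_trinomial_bivariate (a : R) {q : ℕ} (hq : 2 ≤ q) :
    Irreducible (trinomial 0 (q - 1) q (X + C (a ^ q)) (C a + X ^ q) 1 : R[X][X]) := by
  set u : R[X] := 1 + C a * X + C (a ^ q) * X ^ q
  have hu0 : u.coeff 0 = 1 := by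
    simp only [u, coeff_add, coeff_one_zero, mul_coeff_zero, coeff_C_zero, coeff_X_zero, mul_zero,
      add_zero, coeff_X_pow, mul_ite, mul_one, add_eq_left, ite_eq_right_iff]
    omega
  have hXu : ¬X ∣ u := by rw [X_dvd_iff, hu0]; exact one_ne_zero
  have hEisenstein : Irreducible (trinomial 0 (q - 1) q X (X ^ q) u) :=
    irreducible_trinomial_of_prime prime_X (dvd_pow_self X (by omega)) hXu (by omega) (by omega)
  have hswapped : Irreducible (trinomial 0 1 q u (X ^ q) X) := by
    refine irreducible_of_irreducible_mirror ?_
    rwa [trinomial_mirror one_pos (by omega) (fun h => by simp [h] at hu0) X_ne_zero, add_zero]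
  have hmirror : Irreducible (trinomial 0 1 q 1 (C a + X ^ q) (X + C (a ^ q)) : R[X][X]) := by
    rw [← swap_trinomial] at hswapped
    exact (MulEquiv.irreducible_iff (swap : R[X][X] ≃ₐ[R] R[X][X]).toMulEquiv).mp hswapped
  refine irreducible_of_irreducible_mirror ?_
  rwa [trinomial_mirror (by omega) (by omega) (X_add_C_ne_zero _) one_ne_zero,
    Nat.sub_sub_self (by omega : 1 ≤ q), add_zero]

end Polynomial

theorem stmt_6_general (p h q : ℕ) [Fact p.Prime] (hh : 0 < h) (hq : q = p ^ h)
    (F : Type) [Field F] (a : F) :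
    Irreducible
      ((X ^ q + C (RatFunc.C a + RatFunc.X ^ q) * X ^ (q - 1)
          + C (RatFunc.X + RatFunc.C (a ^ q))) : Polynomial (RatFunc F)) := by
  have hq2 : 2 ≤ q := hq ▸ (Fact.out : p.Prime).two_le.trans (Nat.le_self_pow hh.ne' p)
  have hg : (X ^ q + C (RatFunc.C a + RatFunc.X ^ q) * X ^ (q - 1)
      + C (RatFunc.X + RatFunc.C (a ^ q)) : (RatFunc F)[X]) =
      (trinomial 0 (q - 1) q (X + C (a ^ q)) (C a + X ^ q) 1 : F[X][X]).map
        (algebraMap F[X] (RatFunc F)) := by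
    simp only [trinomial_def, pow_zero, mul_one, one_mul, map_one, map_add, map_pow, map_C, map_X,
      Polynomial.map_add, Polynomial.map_mul, Polynomial.map_pow, RatFunc.algebraMap_X,
      RatFunc.algebraMap_C]
    ring
  rw [hg, ← (trinomial_monic (by omega) (by omega)).irreducible_iff_irreducible_map_fraction_map]
  exact irreducible_trinomial_bivariate a hq2

theorem stmt_6 (p h q : ℕ) [Fact p.Prime] (hh : 0 < h) (hq : q = p ^ h)
    (F : Type) [Field F] [IsAlgClosed F] [CharP F p] (a : F) :
    Irreducible
      ((X ^ q + C (RatFunc.C a + RatFunc.X ^ q) * X ^ (q - 1)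
          + C (RatFunc.X + RatFunc.C (a ^ q))) : Polynomial (RatFunc F)) :=
  stmt_6_general p h q hh hq F a
end

section
/- Let p be an odd prime, h ≥ 1, q = p^h, F an algebraically closed field of characteristic p, and K = F(m) the rational function field over F. Let t ∈ F with t^{q²} ≠ t. Then the polynomial g(T) = T^q + (m + t)·T^{q−1} + (m + t^q) is irreducible in K[T]. -/
/-!
Write `g` as the image of `P = T^q + (m + t) T^(q-1) + (m + t^q) ∈ F[m][T]`. Since `P` is monic in
`T`, Gauss's lemma reduces irreducibility over `F(m)` to irreducibility in `F[m][T] = F[T][m]`,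
where `P = (T^(q-1) + 1) m + (T^q + t T^(q-1) + t^q)` is linear in `m`; so it suffices that the two
coefficients are coprime. A common root `u` would satisfy `u^q = -u`, hence `u = t^q - t`, and then
Frobenius turns `(t^q - t)^q = -(t^q - t)` into `t^(q^2) = t`.
-/

open Polynomial

theorem pow_sq_eq_self_of_common_root {A : Type*} [CommRing A] {p : ℕ} [Fact p.Prime] [CharP A p]
    {h : ℕ} {t u : A} (hA : u ^ (p ^ h - 1) + 1 = 0)
    (hB : u ^ p ^ h + t * u ^ (p ^ h - 1) + t ^ p ^ h = 0) : t ^ (p ^ h) ^ 2 = t := by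
  have hq : p ^ h - 1 + 1 = p ^ h := Nat.sub_add_cancel (Nat.one_le_pow _ _ (Fact.out : p.Prime).pos)
  have hu_pred : u ^ (p ^ h - 1) = -1 := eq_neg_of_add_eq_zero_left hA
  have hu_pow : u ^ p ^ h = -u := by rw [← hq, pow_succ, hu_pred, neg_one_mul]
  have hu : u = t ^ p ^ h - t := by
    rw [hu_pow, hu_pred] at hB
    linear_combination -hB
  have h_frob := hu ▸ hu_pow
  rw [sub_pow_char_pow, ← pow_mul, ← sq] at h_frob
  linear_combination h_frob

theorem isCoprime_X_pow_pred_add_one_of_pow_sq_ne_self {F : Type*} [Field F] {p : ℕ}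
    [Fact p.Prime] [CharP F p] {h : ℕ} {t : F} (ht : t ^ (p ^ h) ^ 2 ≠ t) :
    IsCoprime (X ^ (p ^ h - 1) + 1 : F[X]) (X ^ p ^ h + C t * X ^ (p ^ h - 1) + C (t ^ p ^ h)) := by
  rw [isCoprime_iff_aeval_ne_zero]
  intro A _ _ _ a
  by_contra! ⟨hA, hB⟩
  have := charP_of_injective_algebraMap (algebraMap F A).injective p
  simp only [map_add, map_pow, map_mul, aeval_X, aeval_C, map_one] at hA hB
  exact ht <| (algebraMap F A).injective <| by simpa using pow_sq_eq_self_of_common_root hA hB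

open scoped Polynomial.Bivariate in
theorem irreducible_map_of_swap_eq_C_mul_X_add_C {k K : Type*} [Field k] [Field K]
    [Algebra k[X] K] [IsFractionRing k[X] K] {P : k[X][Y]} (hP : P.Monic) {a b : k[X]}
    (ha : a ≠ 0) (hab : IsCoprime a b) (hswap : Bivariate.swap P = C a * Y + C b) :
    Irreducible (P.map (algebraMap k[X] K)) := by
  rw [← hP.irreducible_iff_irreducible_map_fraction_map, ← MulEquiv.irreducible_iff Bivariate.swap,
    hswap]
  exact irreducible_C_mul_X_add_C ha hab.isRelPrime

theorem stmt_11_general (p h q : ℕ) [Fact p.Prime] (hq : q = p ^ h)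
    (F : Type) [Field F] [CharP F p] (t : F)
    (ht : t ^ (q ^ 2) ≠ t) :
    Irreducible
      ((X ^ q + C (RatFunc.X + RatFunc.C t) * X ^ (q - 1)
          + C (RatFunc.X + RatFunc.C (t ^ q))) : Polynomial (RatFunc F)) := by
  have hq0 : q ≠ 0 := hq ▸ pow_ne_zero h (Fact.out : p.Prime).ne_zero
  have hq1 : q ≠ 1 := by rintro rfl; simp at ht
  have hP : (X ^ q + C (X + C t) * X ^ (q - 1) + C (X + C (t ^ q)) : F[X][X]).Monic := by
    monicity!
    simp [hq0, show q ≠ q - 1 by omega]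
  have hA : (X ^ (q - 1) + 1 : F[X]) ≠ 0 := by
    simpa using (monic_X_pow_add_C (1 : F) (show q - 1 ≠ 0 by omega)).ne_zero
  have hAB := hq ▸ isCoprime_X_pow_pred_add_one_of_pow_sq_ne_self (hq ▸ ht)
  have hswap : Bivariate.swap (X ^ q + C (X + C t) * X ^ (q - 1) + C (X + C (t ^ q)) : F[X][X]) =
      C (X ^ (q - 1) + 1) * X + C (X ^ q + C t * X ^ (q - 1) + C (t ^ q)) := by
    simp only [map_add, map_pow, map_mul, map_one, Bivariate.swap_X, Bivariate.swap_Y,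
      Bivariate.swap_C_C]
    ring
  simpa using irreducible_map_of_swap_eq_C_mul_X_add_C (K := RatFunc F) hP hA hAB hswap

theorem stmt_11 (p h q : ℕ) [Fact p.Prime] (hodd : Odd p) (hh : 0 < h) (hq : q = p ^ h)
    (F : Type) [Field F] [IsAlgClosed F] [CharP F p] (t : F)
    (ht : t ^ (q ^ 2) ≠ t) :
    Irreducible
      ((X ^ q + C (RatFunc.X + RatFunc.C t) * X ^ (q - 1)
          + C (RatFunc.X + RatFunc.C (t ^ q))) : Polynomial (RatFunc F)) :=
  stmt_11_general p h q hq F t ht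
end

section
/- Let q be a prime power, r ≥ 2, and let F = GF(q^{2r}) be the field with q^{2r} elements. Let Ω be the set of points [x : y : z] of the projective plane PG(2,F) satisfying x^{q+1} + y^q·z + y·z^q = 0. Then every line of PG(2,F) contains exactly 0, 1, 2, or q+1 points of Ω, and at least one line contains exactly q+1 points of Ω. -/
/-!
Write `σ` for the Frobenius `t ↦ t ^ q` and `h(u, v) = σ u₀ * v₀ + σ u₂ * v₁ + σ u₁ * v₂`, so that
`Ω` is the set of points `[v]` with `h(v, v) = 0`. If a line contains two points `[e]`, `[f]` of
`Ω`, its other points are the `[e + t f]`, and `[e + t f] ∈ Ω` iff `h(e, f) t + h(f, e) t ^ q = 0`.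
The two coefficients cannot both vanish: otherwise the σ-twists of `e` and `f` would span a plane
orthogonal, for the dot product, to the plane spanned by `e` and `f` in `F³`. Hence the solutions
are `t = 0` and, when both coefficients are nonzero, the solutions of
`t ^ (q - 1) = -h(e, f) / h(f, e)`, of which there are `0` or `q - 1` since `q - 1` divides
`|F| - 1`. On the line `x = 0` both coefficients are `1`, and `-1` is a `(q - 1)`-th power in
`GF(q ^ 2r)` because `2 (q - 1)` divides `q ^ 2r - 1` for odd `q`.
-/

open Module Matrix
open scoped LinearAlgebra.Projectivization

namespace Projectivization

variable {K V : Type*} [Field K] [AddCommGroup V] [Module K V]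

theorem rep_mem_iff_of_smul_mem_iff {S : Set V} (hS : ∀ c : K, c ≠ 0 → ∀ v, c • v ∈ S ↔ v ∈ S)
    {v : V} (hv : v ≠ 0) : (mk K v hv).rep ∈ S ↔ v ∈ S := by
  obtain ⟨a, ha⟩ := exists_smul_eq_mk_rep K v hv
  rw [← ha, Units.smul_def, hS _ a.ne_zero]

variable {e f : V}

theorem mk_add_smul_injective (hef : LinearIndependent K ![e, f])
    (hne : ∀ t : K, e + t • f ≠ 0) : Function.Injective fun t ↦ mk K (e + t • f) (hne t) := by
  intro s t hst
  obtain ⟨a, ha⟩ := (mk_eq_mk_iff' K _ _ _ _).mp hst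
  have h := LinearIndependent.pair_iff.mp hef (a - 1) (a * t - s) (by
    rw [show (a - 1) • e + (a * t - s) • f = a • (e + t • f) - (e + s • f) by module, ha,
      sub_self])
  rw [sub_eq_zero.mp h.1, one_mul] at h
  exact (sub_eq_zero.mp h.2).symm

theorem mk_add_smul_ne_mk (hef : LinearIndependent K ![e, f]) {t : K} (ht : e + t • f ≠ 0)
    (hf : f ≠ 0) : mk K (e + t • f) ht ≠ mk K f hf := by
  intro h
  obtain ⟨a, ha⟩ := (mk_eq_mk_iff' K _ _ _ _).mp h
  exact one_ne_zero (LinearIndependent.pair_iff.mp hef 1 (t - a)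
    (by rw [← sub_eq_zero.mpr ha.symm]; module)).1

theorem ncard_setOf_rep_mem_span_pair [Finite K] {S : Set V}
    (hS : ∀ c : K, c ≠ 0 → ∀ v, c • v ∈ S ↔ v ∈ S) (hef : LinearIndependent K ![e, f])
    (hf : f ∈ S) :
    {P : ℙ K V | P.rep ∈ S ∧ P.rep ∈ Submodule.span K {e, f}}.ncard =
      {t : K | e + t • f ∈ S}.ncard + 1 := by
  have hpair := LinearIndependent.pair_iff.mp hef
  have hf0 : f ≠ 0 := fun h ↦ one_ne_zero (hpair 0 1 (by simp [h])).2
  have hne (t : K) : e + t • f ≠ 0 := fun h ↦ one_ne_zero (hpair 1 t (by rwa [one_smul])).1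
  have hT : ∀ c : K, c ≠ 0 → ∀ v, c • v ∈ S ∩ Submodule.span K {e, f} ↔
      v ∈ S ∩ Submodule.span K {e, f} :=
    fun c hc v ↦ and_congr (hS c hc v) (Submodule.smul_mem_iff _ hc)
  have hset : {P : ℙ K V | P.rep ∈ S ∧ P.rep ∈ Submodule.span K {e, f}} =
      insert (mk K f hf0) ((fun t ↦ mk K (e + t • f) (hne t)) '' {t : K | e + t • f ∈ S}) := by
    ext P
    induction P with | h v hv =>
    change (mk K v hv).rep ∈ S ∩ _ ↔ _
    rw [rep_mem_iff_of_smul_mem_iff hT]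
    simp only [Set.mem_insert_iff, Set.mem_image, Set.mem_ofPred_eq, mk_eq_mk_iff,
      Units.smul_def]
    constructor
    · rintro ⟨hvS, hvspan⟩
      obtain ⟨a, b, rfl⟩ := Submodule.mem_span_pair.mp hvspan
      by_cases ha : a = 0
      · have hb : b ≠ 0 := by rintro rfl; simp [ha] at hv
        exact Or.inl ⟨Units.mk0 b hb, by simp [ha]⟩
      · have hab : a • e + b • f = a • (e + (a⁻¹ * b) • f) := by
          rw [smul_add, smul_smul, mul_inv_cancel_left₀ ha]
        refine Or.inr ⟨a⁻¹ * b, (hS a ha _).mp (hab ▸ hvS), (Units.mk0 a ha)⁻¹, ?_⟩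
        rw [hab, Units.val_inv_eq_inv_val, Units.val_mk0, inv_smul_smul₀ ha]
    · rintro (⟨c, rfl⟩ | ⟨t, ht, c, hc⟩)
      · exact (hT c c.ne_zero f).mpr ⟨hf, Submodule.subset_span (by simp)⟩
      · rw [← hT c c.ne_zero, hc]
        exact ⟨ht, add_mem (Submodule.subset_span (by simp))
          (Submodule.smul_mem _ _ (Submodule.subset_span (by simp)))⟩
  have hnotMem : mk K f hf0 ∉ (fun t ↦ mk K (e + t • f) (hne t)) '' {t : K | e + t • f ∈ S} :=
    fun ⟨t, _, ht⟩ ↦ mk_add_smul_ne_mk hef (hne t) hf0 ht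
  rw [hset, Set.ncard_insert_of_notMem hnotMem ((Set.toFinite _).image _),
    Set.ncard_image_of_injective _ (mk_add_smul_injective hef hne)]

end Projectivization

theorem LinearIndependent.finrank_span_pair {K V : Type*} [Field K] [AddCommGroup V] [Module K V]
    {e f : V} (hef : LinearIndependent K ![e, f]) : finrank K (Submodule.span K {e, f}) = 2 := by
  have h := finrank_span_eq_card hef
  rwa [range_cons_cons_empty, Fintype.card_fin] at h

theorem Submodule.span_pair_eq_of_finrank_eq_two {K V : Type*} [Field K] [AddCommGroup V]
    [Module K V] [FiniteDimensional K V] {W : Submodule K V} {e f : V}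
    (hef : LinearIndependent K ![e, f]) (he : e ∈ W) (hf : f ∈ W) (hW : finrank K W = 2) :
    span K {e, f} = W :=
  eq_of_le_of_finrank_le (span_le.mpr (Set.insert_subset he (Set.singleton_subset_iff.mpr hf)))
    (hW ▸ hef.finrank_span_pair.ge)

theorem setOf_mul_add_mul_pow_eq_zero {K : Type*} [Field K] {q : ℕ} (hq : 2 ≤ q) {B C : K}
    (hC : C ≠ 0) : {t : K | B * t + C * t ^ q = 0} = insert 0 {t | t ^ (q - 1) = -B / C} := by
  ext t
  rcases eq_or_ne t 0 with rfl | ht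
  · simp [zero_pow (by omega : q ≠ 0)]
  · have h : B * t + C * t ^ q = t * C * (t ^ (q - 1) - -B / C) := by
      rw [← mul_pow_sub_one (by omega : q ≠ 0) t]
      field_simp
      ring
    simp [h, ht, hC, sub_eq_zero]

namespace FiniteField

variable {F : Type*} [Field F] [Fintype F]

theorem exists_orderOf_eq_card_sub_one : ∃ g : Fˣ, orderOf g = Fintype.card F - 1 := by
  obtain ⟨g, hg⟩ := IsCyclic.exists_ofOrder_eq_natCard (α := Fˣ)
  exact ⟨g, by rw [hg, Nat.card_units, Nat.card_eq_fintype_card]⟩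

theorem exists_isPrimitiveRoot_of_dvd_card_sub_one {n : ℕ} (hn : n ∣ Fintype.card F - 1) :
    ∃ ζ : F, IsPrimitiveRoot ζ n := by
  obtain ⟨g, hg⟩ := exists_orderOf_eq_card_sub_one (F := F)
  have hg0 : orderOf g ≠ 0 := by have := Fintype.one_lt_card (α := F); omega
  refine ⟨(g ^ (orderOf g / n) : Fˣ), IsPrimitiveRoot.coe_units_iff.mpr ?_⟩
  have h := IsPrimitiveRoot.orderOf (g ^ (orderOf g / n))
  rwa [orderOf_pow_orderOf_div hg0 (hg ▸ hn)] at h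

theorem exists_pow_eq_neg_one_of_two_mul_dvd {n : ℕ} (hn : 2 * n ∣ Fintype.card F - 1) :
    ∃ t : F, t ^ n = -1 := by
  obtain ⟨g, hg⟩ := exists_orderOf_eq_card_sub_one (F := F)
  obtain ⟨m, hm⟩ := hn
  have hcard := Fintype.one_lt_card (α := F)
  have hsq : (g ^ (n * m)) ^ 2 = 1 := by
    rw [← pow_mul, show n * m * 2 = orderOf g by rw [hg, hm]; ring, pow_orderOf_eq_one]
  have hne : g ^ (n * m) ≠ 1 := by
    have : 0 < n * m := by rw [← Nat.mul_pos_iff_of_pos_left two_pos, ← mul_assoc, ← hm]; omega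
    exact pow_ne_one_of_lt_orderOf this.ne' (by rw [hg, hm, mul_assoc]; omega)
  refine ⟨(g ^ m : Fˣ), ?_⟩
  rw [← Units.val_pow_eq_pow_val, ← pow_mul, mul_comm]
  have h2 : ((g ^ (n * m) : Fˣ) : F) ^ 2 = 1 := by
    rw [← Units.val_pow_eq_pow_val, hsq, Units.val_one]
  exact (sq_eq_one_iff.mp h2).resolve_left (mt Units.val_eq_one.mp hne)

theorem exists_pow_sub_one_eq_neg_one {p : ℕ} [Fact p.Prime] [CharP F p] {k r : ℕ}
    (hF : Fintype.card F = (p ^ k) ^ (2 * r)) : ∃ t : F, t ^ (p ^ k - 1) = -1 := by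
  rcases (Fact.out : p.Prime).eq_two_or_odd' with rfl | hp
  · exact ⟨1, by simp [CharTwo.neg_eq]⟩
  · apply exists_pow_eq_neg_one_of_two_mul_dvd
    obtain ⟨m, hm⟩ := hp.pow (n := k)
    rw [hF, hm]
    refine dvd_trans ⟨m + 1, ?_⟩ (Nat.pow_sub_one_dvd_pow_sub_one _ (dvd_mul_right 2 r))
    rw [Nat.add_sub_cancel]
    apply Nat.sub_eq_of_eq_add
    ring

open Polynomial in
theorem ncard_setOf_pow_eq {n : ℕ} (hn : n ∣ Fintype.card F - 1) {c : F}
    (hc : ∃ t : F, t ^ n = c) (hc0 : c ≠ 0) : {t : F | t ^ n = c}.ncard = n := by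
  classical
  obtain ⟨ζ, hζ⟩ := exists_isPrimitiveRoot_of_dvd_card_sub_one hn
  have hn0 : 0 < n := Nat.pos_of_ne_zero fun h ↦ by
    have := Fintype.one_lt_card (α := F); simp [h] at hn; omega
  have hset : {t : F | t ^ n = c} = (nthRoots n c).toFinset := by
    ext t
    simp [mem_nthRoots hn0]
  rw [hset, Set.ncard_coe_finset, Multiset.toFinset_card_of_nodup (hζ.nthRoots_nodup hc0),
    hζ.card_nthRoots, if_pos hc]

variable {q : ℕ}

theorem ncard_setOf_mul_add_mul_pow_eq_zero_of_exists (hq : 2 ≤ q)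
    (hdvd : q - 1 ∣ Fintype.card F - 1) {B C : F} (hB : B ≠ 0) (hC : C ≠ 0)
    (h : ∃ t : F, t ^ (q - 1) = -B / C) : {t : F | B * t + C * t ^ q = 0}.ncard = q := by
  have hBC : -B / C ≠ 0 := div_ne_zero (neg_ne_zero.mpr hB) hC
  rw [setOf_mul_add_mul_pow_eq_zero hq hC, Set.ncard_insert_of_notMem,
    ncard_setOf_pow_eq hdvd h hBC]
  · omega
  · simp [zero_pow (by omega : q - 1 ≠ 0), hBC.symm]

theorem ncard_setOf_mul_add_mul_pow_eq_zero_eq_one_or (hq : 2 ≤ q)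
    (hdvd : q - 1 ∣ Fintype.card F - 1) {B C : F} (hBC : B ≠ 0 ∨ C ≠ 0) :
    {t : F | B * t + C * t ^ q = 0}.ncard = 1 ∨ {t : F | B * t + C * t ^ q = 0}.ncard = q := by
  have hq0 : q ≠ 0 := by omega
  rcases eq_or_ne C 0 with rfl | hC
  · have hB := hBC.resolve_right (not_not.mpr rfl)
    left
    rw [show {t : F | B * t + 0 * t ^ q = 0} = {0} by ext; simp [hB], Set.ncard_singleton]
  rcases eq_or_ne B 0 with rfl | hB
  · left
    rw [show {t : F | 0 * t + C * t ^ q = 0} = {0} by ext; simp [hC, hq0], Set.ncard_singleton]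
  by_cases h : ∃ t : F, t ^ (q - 1) = -B / C
  · exact Or.inr (ncard_setOf_mul_add_mul_pow_eq_zero_of_exists hq hdvd hB hC h)
  · have hempty : {t : F | t ^ (q - 1) = -B / C} = ∅ :=
      Set.eq_empty_of_forall_notMem fun t ht ↦ h ⟨t, ht⟩
    left
    rw [setOf_mul_add_mul_pow_eq_zero hq hC, hempty, insert_empty_eq, Set.ncard_singleton]

end FiniteField

namespace HermitianCurve

section Field

variable {F : Type*} [Field F] (σ : F →+* F)

def twist : (Fin 3 → F) →ₛₗ[σ] (Fin 3 → F) where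
  toFun v := ![σ (v 0), σ (v 2), σ (v 1)]
  map_add' u v := by ext i; fin_cases i <;> simp
  map_smul' c v := by ext i; fin_cases i <;> simp

def form (u v : Fin 3 → F) : F := twist σ u ⬝ᵥ v

theorem form_self (v : Fin 3 → F) :
    form σ v v = σ (v 0) * v 0 + σ (v 2) * v 1 + σ (v 1) * v 2 := by
  simp [form, twist, dotProduct, Fin.sum_univ_three]

theorem form_smul_self (c : F) (v : Fin 3 → F) :
    form σ (c • v) (c • v) = σ c * c * form σ v v := by
  simp only [form, map_smulₛₗ, smul_dotProduct, dotProduct_smul, smul_eq_mul]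
  ring

theorem form_add_smul_self (e f : Fin 3 → F) (t : F) :
    form σ (e + t • f) (e + t • f) =
      form σ e e + form σ e f * t + form σ f e * σ t + σ t * t * form σ f f := by
  simp only [form, map_add, map_smulₛₗ, add_dotProduct, dotProduct_add, smul_dotProduct,
    dotProduct_smul, smul_eq_mul]
  ring

theorem eq_zero_of_twist_eq_zero {v : Fin 3 → F} (hv : twist σ v = 0) : v = 0 := by
  have h i := congrFun hv i
  simp only [twist, LinearMap.coe_mk, AddHom.coe_mk, Pi.zero_apply] at h
  ext i
  fin_cases i
  · simpa using h 0
  · simpa using h 2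
  · simpa using h 1

theorem form_ne_zero_or_form_ne_zero (hσ : Function.Surjective σ) {e f : Fin 3 → F}
    (hef : LinearIndependent F ![e, f]) (he : form σ e e = 0) (hf : form σ f f = 0) :
    form σ e f ≠ 0 ∨ form σ f e ≠ 0 := by
  by_contra! h
  have htwist : LinearIndependent F ![twist σ e, twist σ f] := by
    convert hef.map_of_surjective_injective σ (twist σ).toAddMonoidHom hσ
      (fun _ ↦ eq_zero_of_twist_eq_zero σ) (twist σ).map_smulₛₗ using 1
    ext i
    fin_cases i <;> rfl
  have hmul : of ![e, f] * (of ![twist σ e, twist σ f])ᵀ = 0 := by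
    ext i j
    rw [mul_apply', dotProduct_comm]
    fin_cases i <;> fin_cases j
    exacts [he, h.2, h.1, hf]
  have hrank := rank_add_rank_le_card_of_mul_eq_zero hmul
  rw [rank_transpose, LinearIndependent.rank_matrix (M := of ![e, f]) hef,
    LinearIndependent.rank_matrix (M := of ![twist σ e, twist σ f]) htwist] at hrank
  simp at hrank

theorem ncard_isotropic_span_pair_eq [Finite F] {e f : Fin 3 → F}
    (hef : LinearIndependent F ![e, f]) (he : form σ e e = 0) (hf : form σ f f = 0) :
    {P : ℙ F (Fin 3 → F) | form σ P.rep P.rep = 0 ∧ P.rep ∈ Submodule.span F {e, f}}.ncard =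
      {t : F | form σ e f * t + form σ f e * σ t = 0}.ncard + 1 := by
  have hS (c : F) (hc : c ≠ 0) (v : Fin 3 → F) :
      c • v ∈ {v | form σ v v = 0} ↔ v ∈ {v | form σ v v = 0} := by
    simp [form_smul_self, hc]
  have hline : {t : F | e + t • f ∈ {v | form σ v v = 0}} =
      {t | form σ e f * t + form σ f e * σ t = 0} := by
    ext t
    simp [form_add_smul_self, he, hf]
  rw [← hline]
  exact Projectivization.ncard_setOf_rep_mem_span_pair hS hef hf

theorem linearIndependent_axis :
    LinearIndependent F ![(Pi.single 1 1 : Fin 3 → F), Pi.single 2 1] :=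
  LinearIndependent.pair_iff.mpr fun s t hst ↦
    ⟨by simpa using congrFun hst 1, by simpa using congrFun hst 2⟩

end Field

section FiniteField

variable {F : Type*} [Field F] [Fintype F] (σ : F →+* F) {q : ℕ}

theorem ncard_isotropic_span_pair_eq_two_or (hσ : ∀ t, σ t = t ^ q) (hq : 2 ≤ q)
    (hdvd : q - 1 ∣ Fintype.card F - 1) {e f : Fin 3 → F} (hef : LinearIndependent F ![e, f])
    (he : form σ e e = 0) (hf : form σ f f = 0) :
    {P : ℙ F (Fin 3 → F) | form σ P.rep P.rep = 0 ∧ P.rep ∈ Submodule.span F {e, f}}.ncard = 2 ∨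
      {P : ℙ F (Fin 3 → F) | form σ P.rep P.rep = 0 ∧ P.rep ∈ Submodule.span F {e, f}}.ncard =
        q + 1 := by
  have hσsurj : Function.Surjective σ := Finite.surjective_of_injective σ.injective
  rw [ncard_isotropic_span_pair_eq σ hef he hf]
  simp only [hσ]
  rcases FiniteField.ncard_setOf_mul_add_mul_pow_eq_zero_eq_one_or hq hdvd
    (form_ne_zero_or_form_ne_zero σ hσsurj hef he hf) with h | h <;> omega

theorem ncard_isotropic_axis (hσ : ∀ t, σ t = t ^ q) (hq : 2 ≤ q)
    (hdvd : q - 1 ∣ Fintype.card F - 1) (h : ∃ t : F, t ^ (q - 1) = -1) :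
    {P : ℙ F (Fin 3 → F) | form σ P.rep P.rep = 0 ∧
      P.rep ∈ Submodule.span F {Pi.single 1 1, Pi.single 2 1}}.ncard = q + 1 := by
  have h12 : form σ (Pi.single 1 1) (Pi.single 2 1) = 1 := by simp [form, twist]
  have h21 : form σ (Pi.single 2 1) (Pi.single 1 1) = 1 := by simp [form, twist]
  rw [ncard_isotropic_span_pair_eq σ linearIndependent_axis (by simp [form_self])
    (by simp [form_self]), h12, h21]
  simp only [hσ]
  rw [FiniteField.ncard_setOf_mul_add_mul_pow_eq_zero_of_exists hq hdvd one_ne_zero one_ne_zero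
    (by simpa using h)]

end FiniteField

end HermitianCurve

open HermitianCurve in
theorem stmt_13_general (p k q r : ℕ) [Fact p.Prime] (hk : 0 < k) (hq : q = p ^ k)
    (F : Type) [Field F] [Fintype F] (hF : Fintype.card F = q ^ (2 * r))
    (Ω : Set (Projectivization F (Fin 3 → F)))
    (hΩ : Ω = {P | (P.rep 0) ^ (q + 1) + (P.rep 1) ^ q * P.rep 2 + P.rep 1 * (P.rep 2) ^ q = 0}) :
    (∀ ℓ : Submodule F (Fin 3 → F), Module.finrank F ℓ = 2 →
      {P | P ∈ Ω ∧ P.rep ∈ ℓ}.ncard ∈ ({0, 1, 2, q + 1} : Set ℕ)) ∧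
    (∃ ℓ : Submodule F (Fin 3 → F), Module.finrank F ℓ = 2 ∧
      {P | P ∈ Ω ∧ P.rep ∈ ℓ}.ncard = q + 1) := by
  subst hq
  have : CharP F p := charP_of_card_eq_prime_pow (hF.trans (pow_mul p k _).symm)
  set σ := iterateFrobenius F p k
  have hσ (t : F) : σ t = t ^ p ^ k := iterateFrobenius_def ..
  have hq2 : 2 ≤ p ^ k := Nat.one_lt_pow hk.ne' (Fact.out : p.Prime).one_lt
  have hdvd : p ^ k - 1 ∣ Fintype.card F - 1 := hF ▸ Nat.sub_one_dvd_pow_sub_one _ _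
  obtain rfl : Ω = {P | form σ P.rep P.rep = 0} := by
    rw [hΩ]
    ext P
    simp only [Set.mem_ofPred_eq, form_self, hσ]
    ring_nf
  refine ⟨fun ℓ hℓ ↦ ?_, ⟨_, LinearIndependent.finrank_span_pair linearIndependent_axis,
    ncard_isotropic_axis σ hσ hq2 hdvd (FiniteField.exists_pow_sub_one_eq_neg_one hF)⟩⟩
  rcases Set.subsingleton_or_nontrivial {P : ℙ F (Fin 3 → F) | form σ P.rep P.rep = 0 ∧ P.rep ∈ ℓ}
    with hs | ⟨P, ⟨hP, hPℓ⟩, Q, ⟨hQ, hQℓ⟩, hPQ⟩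
  · rcases hs.eq_empty_or_singleton with h | ⟨P, h⟩ <;> simp [h]
  · have hind := Projectivization.linearIndependent_pair_iff_ne.mpr hPQ
    rw [← Submodule.span_pair_eq_of_finrank_eq_two hind hPℓ hQℓ hℓ]
    rcases ncard_isotropic_span_pair_eq_two_or σ hσ hq2 hdvd hind hP hQ with h | h <;> simp [h]

theorem stmt_13 (p k q r : ℕ) [Fact p.Prime] (hk : 0 < k) (hq : q = p ^ k) (hr : 2 ≤ r)
    (F : Type) [Field F] [Fintype F] (hF : Fintype.card F = q ^ (2 * r))
    (Ω : Set (Projectivization F (Fin 3 → F)))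
    (hΩ : Ω = {P | (P.rep 0) ^ (q + 1) + (P.rep 1) ^ q * P.rep 2 + P.rep 1 * (P.rep 2) ^ q = 0}) :
    (∀ ℓ : Submodule F (Fin 3 → F), Module.finrank F ℓ = 2 →
      {P | P ∈ Ω ∧ P.rep ∈ ℓ}.ncard ∈ ({0, 1, 2, q + 1} : Set ℕ)) ∧
    (∃ ℓ : Submodule F (Fin 3 → F), Module.finrank F ℓ = 2 ∧
      {P | P ∈ Ω ∧ P.rep ∈ ℓ}.ncard = q + 1) :=
  stmt_13_general p k q r hk hq F hF Ω hΩ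
end
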